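/- arXiv:1301.5119 — 2 statements merged into one kernel-verified Lean document; each statement's English description precedes it below -/
import Mathlib

section
/- Monotonicity of the Hardy-coupling constant (part of Proposition 2.3): the function λ(α) = 2^{2s} · (Γ((N+2s+2α)/4) / Γ((N-2s-2α)/4)) · (Γ((N+2s-2α)/4) / Γ((N-2s+2α)/4)) is continuous and strictly decreasing on the interval (0, (N-2s)/2). -/
open Real Set Filter Topology

noncomputable section

/-- The Hardy-coupling constant
`λ(α) = 2^{2s} (Γ((N+2s+2α)/4)/Γ((N-2s-2α)/4)) (Γ((N+2s-2α)/4)/Γ((N-2s+2α)/4))`. -/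
def lamAlpha (N : ℕ) (s α : ℝ) : ℝ :=
  2 ^ (2*s) * (Real.Gamma (((N:ℝ) + 2*s + 2*α)/4) / Real.Gamma (((N:ℝ) - 2*s - 2*α)/4))
    * (Real.Gamma (((N:ℝ) + 2*s - 2*α)/4) / Real.Gamma (((N:ℝ) - 2*s + 2*α)/4))

namespace HardyAux

/-- `x ↦ log (x+c) - log (x+c+δ)` is strictly concave on `(0,∞)` for `c ≥ 0, δ > 0`. -/
lemma strictConcave_logdiff (c δ : ℝ) (hc : 0 ≤ c) (hδ : 0 < δ) :
    StrictConcaveOn ℝ (Set.Ioi 0) (fun x : ℝ => Real.log (x + c) - Real.log (x + c + δ)) := by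
  have hder : ∀ x : ℝ, 0 < x →
      deriv (fun y : ℝ => Real.log (y + c) - Real.log (y + c + δ)) x
        = 1 / (x + c) - 1 / (x + c + δ) := by
    intro x hx
    have h1 : HasDerivAt (fun y : ℝ => Real.log (y + c)) (1 / (x + c)) x :=
      ((hasDerivAt_id x).add_const c).log (by positivity)
    have h2 : HasDerivAt (fun y : ℝ => Real.log (y + c + δ)) (1 / (x + c + δ)) x :=
      (((hasDerivAt_id x).add_const c).add_const δ).log (by positivity)
    exact (h1.sub h2).deriv
  apply strictConcaveOn_of_deriv2_neg (convex_Ioi 0)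
  · intro x hx
    have hx' : (0:ℝ) < x := hx
    have c1 : ContinuousAt (fun y : ℝ => Real.log (y + c)) x := by
      have : ContinuousAt (fun y : ℝ => y + c) x := by fun_prop
      exact (Real.continuousAt_log (by positivity)).comp this
    have c2 : ContinuousAt (fun y : ℝ => Real.log (y + c + δ)) x := by
      have : ContinuousAt (fun y : ℝ => y + c + δ) x := by fun_prop
      exact (Real.continuousAt_log (by positivity)).comp this
    exact (c1.sub c2).continuousWithinAt
  · intro x hx
    rw [interior_Ioi] at hx
    have hx' : (0:ℝ) < x := hx
    show deriv (deriv fun y : ℝ => Real.log (y + c) - Real.log (y + c + δ)) x < 0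
    have he : deriv (fun y : ℝ => Real.log (y + c) - Real.log (y + c + δ))
        =ᶠ[𝓝 x] fun y : ℝ => 1 / (y + c) - 1 / (y + c + δ) :=
      Filter.eventuallyEq_of_mem (Ioi_mem_nhds hx') (fun y hy => hder y hy)
    rw [he.deriv_eq]
    have h1 : HasDerivAt (fun y : ℝ => 1 / (y + c)) (-1 / (x + c)^2) x := by
      have := ((hasDerivAt_id x).add_const c).inv (by positivity : x + c ≠ 0)
      simpa [one_div, Pi.inv_def] using this
    have h2 : HasDerivAt (fun y : ℝ => 1 / (y + c + δ)) (-1 / (x + c + δ)^2) x := by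
      have := (((hasDerivAt_id x).add_const c).add_const δ).inv
        (by positivity : x + c + δ ≠ 0)
      simpa [one_div, Pi.inv_def] using this
    have h12 : HasDerivAt (fun y : ℝ => 1 / (y + c) - 1 / (y + c + δ))
        (-1 / (x + c)^2 - -1 / (x + c + δ)^2) x := h1.sub h2
    rw [h12.deriv]
    have hlt : 1 / (x + c + δ)^2 < 1 / (x + c)^2 := by
      apply one_div_lt_one_div_of_lt (by positivity)
      nlinarith
    rw [neg_div, neg_div]
    linarith

lemma concaveOn_finset_sum {ι : Type*} (t : Finset ι) (g : ι → ℝ → ℝ)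
    (h : ∀ i ∈ t, ConcaveOn ℝ (Set.Ioi 0) (g i)) :
    ConcaveOn ℝ (Set.Ioi 0) (fun x => ∑ i ∈ t, g i x) := by
  classical
  induction t using Finset.induction_on with
  | empty => simpa using concaveOn_const (0:ℝ) (convex_Ioi 0)
  | @insert a t hni ih =>
      simp only [Finset.sum_insert hni]
      exact (h a (Finset.mem_insert_self _ _)).add
        (ih fun i hi => h i (Finset.mem_insert_of_mem hi))

lemma log_gammaSeq_eq {s : ℝ} (hs : 0 < s) {n : ℕ} (hn : 1 ≤ n) :
    Real.log (Real.GammaSeq s n)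
      = s * Real.log n + Real.log ((n.factorial : ℕ) : ℝ)
        - ∑ j ∈ Finset.range (n+1), Real.log (s + j) := by
  have hn0 : (0:ℝ) < n := by exact_mod_cast hn
  have hprod : (0:ℝ) < ∏ j ∈ Finset.range (n+1), (s + j) :=
    Finset.prod_pos fun j _ => by positivity
  have hfac : (0:ℝ) < ((n.factorial : ℕ) : ℝ) := by exact_mod_cast Nat.factorial_pos n
  rw [Real.GammaSeq, Real.log_div (by positivity) hprod.ne',
    Real.log_mul (by positivity) hfac.ne', Real.log_rpow hn0,
    Real.log_prod (fun j _ => by positivity)]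

/-- `x ↦ log Γ(x+δ) - log Γ(x)` is concave on `(0,∞)`. -/
lemma concaveOn_logGamma_shift {δ : ℝ} (hδ : 0 < δ) :
    ConcaveOn ℝ (Set.Ioi 0)
      (fun x => Real.log (Real.Gamma (x + δ)) - Real.log (Real.Gamma x)) := by
  have hφconc : ∀ n : ℕ, ConcaveOn ℝ (Set.Ioi 0)
      (fun x : ℝ => δ * Real.log n
        + ∑ j ∈ Finset.range (n+1), (Real.log (x + j) - Real.log (x + j + δ))) := by
    intro n
    exact (concaveOn_const (δ * Real.log n) (convex_Ioi 0)).add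
      (concaveOn_finset_sum (Finset.range (n+1))
        (fun j x => Real.log (x + j) - Real.log (x + j + δ))
        (fun j _ => (strictConcave_logdiff j δ (Nat.cast_nonneg j) hδ).concaveOn))
  have hlim : ∀ x : ℝ, 0 < x →
      Tendsto (fun n : ℕ => δ * Real.log n
          + ∑ j ∈ Finset.range (n+1), (Real.log (x + j) - Real.log (x + j + δ)))
        atTop (𝓝 (Real.log (Real.Gamma (x + δ)) - Real.log (Real.Gamma x))) := by
    intro x hx
    have hx' : 0 < x + δ := by linarith
    have h1 : Tendsto (fun n : ℕ =>
        Real.log (Real.GammaSeq (x+δ) n) - Real.log (Real.GammaSeq x n)) atTop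
        (𝓝 (Real.log (Real.Gamma (x + δ)) - Real.log (Real.Gamma x))) :=
      (((Real.continuousAt_log (Real.Gamma_pos_of_pos hx').ne').tendsto.comp
          (Real.GammaSeq_tendsto_Gamma (x+δ))).sub
        ((Real.continuousAt_log (Real.Gamma_pos_of_pos hx).ne').tendsto.comp
          (Real.GammaSeq_tendsto_Gamma x)))
    apply h1.congr'
    filter_upwards [eventually_ge_atTop 1] with n hn
    rw [log_gammaSeq_eq hx' hn, log_gammaSeq_eq hx hn]
    have hsum : ∑ j ∈ Finset.range (n+1), (Real.log (x + j) - Real.log (x + j + δ))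
        = ∑ j ∈ Finset.range (n+1), Real.log (x + j)
          - ∑ j ∈ Finset.range (n+1), Real.log ((x + δ) + j) := by
      rw [Finset.sum_sub_distrib]
      congr 1
      exact Finset.sum_congr rfl fun j _ => by rw [show (x + δ) + j = x + j + δ by ring]
    rw [hsum]
    ring
  refine ⟨convex_Ioi 0, ?_⟩
  intro p hp q hq a b ha hb hab
  have hm : a • p + b • q ∈ Set.Ioi (0:ℝ) := (convex_Ioi 0) hp hq ha hb hab
  refine le_of_tendsto_of_tendsto'
    (((hlim p hp).const_mul a).add ((hlim q hq).const_mul b)) (hlim _ hm)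
    (fun n => ?_)
  have := (hφconc n).2 hp hq ha hb hab
  simpa [smul_eq_mul] using this

/-- `x ↦ log Γ(x+δ) - log Γ(x)` is strictly concave on `(0,∞)`. -/
lemma strictConcaveOn_logGamma_shift {δ : ℝ} (hδ : 0 < δ) :
    StrictConcaveOn ℝ (Set.Ioi 0)
      (fun x => Real.log (Real.Gamma (x + δ)) - Real.log (Real.Gamma x)) := by
  have hconc := concaveOn_logGamma_shift hδ
  have hshift : ConcaveOn ℝ (Set.Ioi 0)
      (fun x => Real.log (Real.Gamma ((x + 1) + δ)) - Real.log (Real.Gamma (x + 1))) := by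
    refine ⟨convex_Ioi 0, ?_⟩
    intro p hp q hq a b ha hb hab
    have hp' : (0:ℝ) < p := hp
    have hq' : (0:ℝ) < q := hq
    have hp1 : p + 1 ∈ Set.Ioi (0:ℝ) := by simp; linarith
    have hq1 : q + 1 ∈ Set.Ioi (0:ℝ) := by simp; linarith
    have h := hconc.2 hp1 hq1 ha hb hab
    have he : a • (p+1) + b • (q+1) = (a • p + b • q) + 1 := by
      simp only [smul_eq_mul]; nlinarith [hab]
    rw [he] at h
    simpa using h
  have hstrict := (strictConcave_logdiff 0 δ le_rfl hδ).add_concaveOn hshift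
  have key : ∀ x : ℝ, x ∈ Set.Ioi (0:ℝ) →
      Real.log (Real.Gamma (x + δ)) - Real.log (Real.Gamma x)
        = (Real.log (x + 0) - Real.log (x + 0 + δ))
          + (Real.log (Real.Gamma ((x + 1) + δ)) - Real.log (Real.Gamma (x + 1))) := by
    intro x hx
    have hx0 : (0:ℝ) < x := hx
    have hxδ : 0 < x + δ := by linarith
    have h1 : Real.Gamma (x + 1) = x * Real.Gamma x := Real.Gamma_add_one hx0.ne'
    have h2 : Real.Gamma ((x + 1) + δ) = (x + δ) * Real.Gamma (x + δ) := by
      rw [show (x + 1) + δ = (x + δ) + 1 by ring, Real.Gamma_add_one hxδ.ne']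
    rw [h1, h2, Real.log_mul hxδ.ne' (Real.Gamma_pos_of_pos hxδ).ne',
      Real.log_mul hx0.ne' (Real.Gamma_pos_of_pos hx0).ne']
    simp only [add_zero]
    ring
  refine ⟨convex_Ioi 0, ?_⟩
  intro p hp q hq hpq a b ha hb hab
  have hm : a • p + b • q ∈ Set.Ioi (0:ℝ) := (convex_Ioi 0) hp hq ha.le hb.le hab
  simp only [smul_eq_mul] at *
  rw [key p hp, key q hq, key _ hm]
  have h := hstrict.2 hp hq hpq ha hb hab
  simpa [smul_eq_mul] using h

/-- Strict concavity implies the "spread" inequality for pairs with equal sums. -/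
lemma strictConcave_spread {F : ℝ → ℝ} (hF : StrictConcaveOn ℝ (Set.Ioi 0) F)
    {p q m1 m2 : ℝ} (hq : 0 < q) (hq1 : q < m1) (h1p : m1 < p) (hq2 : q < m2) (h2p : m2 < p)
    (hsum : m1 + m2 = p + q) : F p + F q < F m1 + F m2 := by
  have hpq : q < p := lt_trans hq1 h1p
  have hpq' : 0 < p - q := by linarith
  set T : ℝ := (m1 - q) / (p - q) with hT
  have hT0 : 0 < T := div_pos (by linarith) hpq'
  have hT1 : T < 1 := (div_lt_one hpq').mpr (by linarith)
  have ht : T * p - T * q = m1 - q := by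
    have h := div_mul_cancel₀ (m1 - q) hpq'.ne'
    rw [hT]; linear_combination h
  have hTm1 : T • p + (1 - T) • q = m1 := by simp only [smul_eq_mul]; nlinarith [ht]
  have hTm2 : (1 - T) • p + T • q = m2 := by simp only [smul_eq_mul]; nlinarith [ht, hsum]
  have hp' : p ∈ Set.Ioi (0:ℝ) := by simp; linarith
  have hq' : q ∈ Set.Ioi (0:ℝ) := hq
  have hne : p ≠ q := by intro h; rw [h] at hpq; exact lt_irrefl q hpq
  have h1 := hF.2 hp' hq' hne hT0 (by linarith : (0:ℝ) < 1 - T) (by ring)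
  have h2 := hF.2 hp' hq' hne (by linarith : (0:ℝ) < 1 - T) hT0 (by ring)
  rw [hTm1] at h1
  rw [hTm2] at h2
  simp only [smul_eq_mul] at h1 h2
  nlinarith [h1, h2]

end HardyAux

/-- **Monotonicity of the Hardy-coupling constant** (part of Proposition 2.3): the map
`α ↦ λ(α)` is continuous and strictly decreasing on `(0, (N-2s)/2)`. -/
theorem lamAlpha_continuous_strictAnti
    (N : ℕ) (s : ℝ) (hN : 0 < N) (hs : s ∈ Set.Ioo (0:ℝ) 1) (hNs : 2*s < (N:ℝ)) :
    ContinuousOn (lamAlpha N s) (Set.Ioo 0 (((N:ℝ) - 2*s)/2)) ∧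
      StrictAntiOn (lamAlpha N s) (Set.Ioo 0 (((N:ℝ) - 2*s)/2)) := by
  obtain ⟨hs0, hs1⟩ := hs
  have hGN : ∀ c : ℝ, 0 < c → ContinuousAt Real.Gamma c := fun c hc =>
    (Real.differentiableAt_Gamma fun m =>
      ne_of_gt (by have := Nat.cast_nonneg (α := ℝ) m; linarith)).continuousAt
  set a : ℝ := ((N:ℝ) + 2*s)/4 with ha
  set b : ℝ := ((N:ℝ) - 2*s)/4 with hb
  have hba : b < a := by rw [ha, hb]; linarith
  have hb0 : 0 < b := by rw [hb]; linarith
  have hval : ∀ α : ℝ, lamAlpha N s α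
      = 2 ^ (2*s) * (Real.Gamma (a + α/2) / Real.Gamma (b - α/2))
        * (Real.Gamma (a - α/2) / Real.Gamma (b + α/2)) := by
    intro α
    unfold lamAlpha
    rw [show ((N:ℝ) + 2*s + 2*α)/4 = a + α/2 by rw [ha]; ring,
      show ((N:ℝ) - 2*s - 2*α)/4 = b - α/2 by rw [hb]; ring,
      show ((N:ℝ) + 2*s - 2*α)/4 = a - α/2 by rw [ha]; ring,
      show ((N:ℝ) - 2*s + 2*α)/4 = b + α/2 by rw [hb]; ring]
  constructor
  · -- Continuity
    intro α hα
    obtain ⟨hα0, hα2⟩ := hα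
    have hN1 : (1:ℝ) ≤ (N:ℝ) := by exact_mod_cast hN
    have h1 : 0 < a + α/2 := by rw [ha]; linarith
    have h2 : 0 < b - α/2 := by rw [hb]; linarith
    have h3 : 0 < a - α/2 := by
      have : α/2 < b := by linarith
      linarith
    have h4 : 0 < b + α/2 := by linarith
    have i1 : ContinuousAt (fun x : ℝ => a + x/2) α := by fun_prop
    have i2 : ContinuousAt (fun x : ℝ => b - x/2) α := by fun_prop
    have i3 : ContinuousAt (fun x : ℝ => a - x/2) α := by fun_prop
    have i4 : ContinuousAt (fun x : ℝ => b + x/2) α := by fun_prop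
    have c1 : ContinuousAt (Real.Gamma ∘ fun x : ℝ => a + x/2) α := ContinuousAt.comp (hGN _ h1) i1
    have c2 : ContinuousAt (Real.Gamma ∘ fun x : ℝ => b - x/2) α := ContinuousAt.comp (hGN _ h2) i2
    have c3 : ContinuousAt (Real.Gamma ∘ fun x : ℝ => a - x/2) α := ContinuousAt.comp (hGN _ h3) i3
    have c4 : ContinuousAt (Real.Gamma ∘ fun x : ℝ => b + x/2) α := ContinuousAt.comp (hGN _ h4) i4
    have hca : ContinuousAt (fun α : ℝ =>
        2 ^ (2*s) * (Real.Gamma (a + α/2) / Real.Gamma (b - α/2))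
          * (Real.Gamma (a - α/2) / Real.Gamma (b + α/2))) α :=
      ((continuousAt_const.mul (c1.div c2 (Real.Gamma_pos_of_pos h2).ne')).mul
        (c3.div c4 (Real.Gamma_pos_of_pos h4).ne'))
    have : ContinuousAt (lamAlpha N s) α := by
      apply hca.congr
      filter_upwards with x
      rw [hval x]
    exact this.continuousWithinAt
  · -- Strict antitonicity
    intro α1 hα1 α2 hα2 h12
    obtain ⟨h10, h1u⟩ := hα1
    obtain ⟨h20, h2u⟩ := hα2
    have ht2b : α2/2 < b := by rw [hb]; linarith
    have ht10 : 0 < α1/2 := by linarith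
    have hδ : 0 < α2/2 - α1/2 := by linarith
    have hF := HardyAux.strictConcaveOn_logGamma_shift hδ
    have key : (Real.log (Real.Gamma ((a + α1/2) + (α2/2 - α1/2))) - Real.log (Real.Gamma (a + α1/2)))
        + (Real.log (Real.Gamma ((b - α2/2) + (α2/2 - α1/2))) - Real.log (Real.Gamma (b - α2/2)))
        < (Real.log (Real.Gamma ((b + α1/2) + (α2/2 - α1/2))) - Real.log (Real.Gamma (b + α1/2)))
        + (Real.log (Real.Gamma ((a - α2/2) + (α2/2 - α1/2))) - Real.log (Real.Gamma (a - α2/2))) :=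
      HardyAux.strictConcave_spread hF
        (by linarith) (by linarith) (by linarith) (by linarith) (by linarith)
        (by ring)
    rw [show (a + α1/2) + (α2/2 - α1/2) = a + α2/2 by ring,
      show (b - α2/2) + (α2/2 - α1/2) = b - α1/2 by ring,
      show (b + α1/2) + (α2/2 - α1/2) = b + α2/2 by ring,
      show (a - α2/2) + (α2/2 - α1/2) = a - α1/2 by ring] at key
    -- positivity of all Gamma arguments
    have pa1 : 0 < a + α1/2 := by linarith
    have pa2 : 0 < a + α2/2 := by linarith
    have pa1' : 0 < a - α1/2 := by linarith
    have pa2' : 0 < a - α2/2 := by linarith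
    have pb1 : 0 < b + α1/2 := by linarith
    have pb2 : 0 < b + α2/2 := by linarith
    have pb1' : 0 < b - α1/2 := by linarith
    have pb2' : 0 < b - α2/2 := by linarith
    have G := fun {x : ℝ} (hx : 0 < x) => Real.Gamma_pos_of_pos hx
    have hprod : Real.Gamma (a + α2/2) * Real.Gamma (a - α2/2)
          * (Real.Gamma (b - α1/2) * Real.Gamma (b + α1/2))
        < Real.Gamma (a + α1/2) * Real.Gamma (a - α1/2)
          * (Real.Gamma (b - α2/2) * Real.Gamma (b + α2/2)) := by
      have hXpos : 0 < Real.Gamma (a + α2/2) * Real.Gamma (a - α2/2)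
          * (Real.Gamma (b - α1/2) * Real.Gamma (b + α1/2)) :=
        mul_pos (mul_pos (G pa2) (G pa2')) (mul_pos (G pb1') (G pb1))
      have hYpos : 0 < Real.Gamma (a + α1/2) * Real.Gamma (a - α1/2)
          * (Real.Gamma (b - α2/2) * Real.Gamma (b + α2/2)) :=
        mul_pos (mul_pos (G pa1) (G pa1')) (mul_pos (G pb2') (G pb2))
      rw [← Real.log_lt_log_iff hXpos hYpos,
        Real.log_mul (mul_pos (G pa2) (G pa2')).ne' (mul_pos (G pb1') (G pb1)).ne',
        Real.log_mul (G pa2).ne' (G pa2').ne', Real.log_mul (G pb1').ne' (G pb1).ne',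
        Real.log_mul (mul_pos (G pa1) (G pa1')).ne' (mul_pos (G pb2') (G pb2)).ne',
        Real.log_mul (G pa1).ne' (G pa1').ne', Real.log_mul (G pb2').ne' (G pb2).ne']
      linarith [key]
    rw [hval α1, hval α2, mul_assoc, mul_assoc]
    have hC : (0:ℝ) < 2 ^ (2*s) := Real.rpow_pos_of_pos two_pos _
    apply mul_lt_mul_of_pos_left _ hC
    rw [div_mul_div_comm, div_mul_div_comm,
      div_lt_div_iff₀ (mul_pos (G pb2') (G pb2)) (mul_pos (G pb1') (G pb1))]
    calc Real.Gamma (a + α2/2) * Real.Gamma (a - α2/2)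
          * (Real.Gamma (b - α1/2) * Real.Gamma (b + α1/2))
        < Real.Gamma (a + α1/2) * Real.Gamma (a - α1/2)
          * (Real.Gamma (b - α2/2) * Real.Gamma (b + α2/2)) := hprod
      _ = _ := by ring
end
end

section
/- Rellich–Pohozaev divergence identity (equation (3.7)): let U ⊆ ℝ^{N+1}_+ be open and let w : U → ℝ be twice continuously differentiable. Then at every point z = (t,x) ∈ U one has div( (1/2) t^{1-2s} |∇w(z)|² z − t^{1-2s} (z·∇w(z)) ∇w(z) ) = ((N-2s)/2) t^{1-2s} |∇w(z)|² − (z·∇w(z)) · div( t^{1-2s} ∇w )(z), where div and ∇ are the Euclidean divergence and gradient in ℝ^{N+1}. -/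
open MeasureTheory Real Set
open scoped RealInnerProductSpace

noncomputable section

/-- The divergence of a vector field on `ℝ^n`: the sum of the partial derivatives of its
components. -/
def divergence {n : ℕ} (Φ : EuclideanSpace ℝ (Fin n) → EuclideanSpace ℝ (Fin n))
    (z : EuclideanSpace ℝ (Fin n)) : ℝ :=
  ∑ i : Fin n, fderiv ℝ (fun y => Φ y i) z (EuclideanSpace.single i 1)

lemma euclid_sum_single {n : ℕ} (c : Fin n → ℝ) (j : Fin n) :
    (∑ i, c i • EuclideanSpace.single i 1 : EuclideanSpace ℝ (Fin n)) j = c j := by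
  classical
  rw [show ((∑ i, c i • EuclideanSpace.single i 1 : EuclideanSpace ℝ (Fin n)) j)
      = ∑ i, (c i • EuclideanSpace.single i 1 : EuclideanSpace ℝ (Fin n)) j from
      by rw [WithLp.ofLp_sum, Finset.sum_apply]]
  simp [EuclideanSpace.single_apply]

lemma gradient_apply_single {n : ℕ} (w : EuclideanSpace ℝ (Fin n) → ℝ)
    (y : EuclideanSpace ℝ (Fin n)) (i : Fin n) :
    gradient w y i = fderiv ℝ w y (EuclideanSpace.single i 1) := by
  have h1 : ⟪gradient w y, EuclideanSpace.single i 1⟫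
      = fderiv ℝ w y (EuclideanSpace.single i 1) := InnerProductSpace.toDual_symm_apply
  rw [EuclideanSpace.inner_single_right] at h1
  simpa using h1

lemma gradient_eq_sum {n : ℕ} (w : EuclideanSpace ℝ (Fin n) → ℝ) :
    gradient w = fun y => ∑ i, fderiv ℝ w y (EuclideanSpace.single i 1) •
      EuclideanSpace.single i 1 := by
  funext y
  ext j
  rw [euclid_sum_single, gradient_apply_single]

set_option maxHeartbeats 2000000 in
/-- **Rellich–Pohozaev divergence identity** (equation (3.7)): for `U ⊆ ℝ^{N+1}_+` open
and `w ∈ C²(U)`, at every `z ∈ U`,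
`div((1/2) t^{1-2s}|∇w|² z − t^{1-2s}(z·∇w)∇w)
  = ((N-2s)/2) t^{1-2s}|∇w|² − (z·∇w) div(t^{1-2s}∇w)`. -/
theorem rellich_pohozaev_divergence_identity
    (N : ℕ) (s : ℝ) (hN : 0 < N) (hs : s ∈ Set.Ioo (0:ℝ) 1) (hNs : 2*s < (N:ℝ))
    (U : Set (EuclideanSpace ℝ (Fin (N+1)))) (hU : IsOpen U)
    (hUsub : U ⊆ {z | 0 < z 0})
    (w : EuclideanSpace ℝ (Fin (N+1)) → ℝ)
    (hw : ContDiffOn ℝ 2 w U) :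
    ∀ z ∈ U,
      divergence (fun y =>
          ((1/2) * (y 0) ^ (1 - 2*s) * ‖gradient w y‖^2) • y
            - ((y 0) ^ (1 - 2*s) * (@inner ℝ _ _ y (gradient w y))) • gradient w y) z
        = (((N:ℝ) - 2*s)/2) * (z 0) ^ (1 - 2*s) * ‖gradient w z‖^2
          - (@inner ℝ _ _ z (gradient w z))
              * divergence (fun y => (y 0) ^ (1 - 2*s) • gradient w y) z := by
  classical
  intro z hz
  have ht : 0 < z 0 := hUsub hz
  have hw2 : ContDiffAt ℝ 2 w z := hw.contDiffAt (hU.mem_nhds hz)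
  have hf'1 : ContDiffAt ℝ 1 (fderiv ℝ w) z := hw2.fderiv_right (by norm_num)
  have hf'' : HasFDerivAt (fderiv ℝ w) (fderiv ℝ (fderiv ℝ w) z) z :=
    (hf'1.differentiableAt one_ne_zero).hasFDerivAt
  set f'' : EuclideanSpace ℝ (Fin (N+1)) →L[ℝ]
      (EuclideanSpace ℝ (Fin (N+1)) →L[ℝ] ℝ) := fderiv ℝ (fderiv ℝ w) z with hf''def
  have hsym : ∀ u v, f'' u v = f'' v u := fun u v => hw2.isSymmSndFDerivAt (by simp [minSmoothness_of_isRCLikeNormedField]) u v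
  set G : EuclideanSpace ℝ (Fin (N+1)) →L[ℝ] EuclideanSpace ℝ (Fin (N+1)) :=
    ∑ i, ((ContinuousLinearMap.apply ℝ ℝ
        (EuclideanSpace.single i 1 : EuclideanSpace ℝ (Fin (N+1)))).comp
          f'').smulRight (EuclideanSpace.single i 1) with hGdef
  have hG : HasFDerivAt (gradient w) G z := by
    rw [gradient_eq_sum]
    exact HasFDerivAt.fun_sum fun i _ =>
      (((ContinuousLinearMap.apply ℝ ℝ
        (EuclideanSpace.single i 1 : EuclideanSpace ℝ (Fin (N+1)))).hasFDerivAt.comp z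
        hf'').smul_const (EuclideanSpace.single i (1:ℝ) : EuclideanSpace ℝ (Fin (N+1))))
  have hGapp : ∀ (v : EuclideanSpace ℝ (Fin (N+1))) j,
      G v j = f'' v (EuclideanSpace.single j 1) := by
    intro v j
    have h1 : G v = ∑ i, (f'' v (EuclideanSpace.single i 1)) • EuclideanSpace.single i 1 := by
      rw [hGdef, ContinuousLinearMap.sum_apply]
      simp
    rw [h1, euclid_sum_single]
  have hip : ∀ (u v : EuclideanSpace ℝ (Fin (N+1))),
      ⟪u, G v⟫ = ∑ j, u j * f'' v (EuclideanSpace.single j 1) := by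
    intro u v
    rw [PiLp.inner_apply]
    refine Finset.sum_congr rfl fun j _ => ?_
    rw [hGapp]
    simp
    ring
  set P : (i : Fin (N+1)) → (EuclideanSpace ℝ (Fin (N+1)) →L[ℝ] ℝ) :=
    fun i => EuclideanSpace.proj i with hPdef
  have hPapp : ∀ (i : Fin (N+1)) (y : EuclideanSpace ℝ (Fin (N+1))), P i y = y i :=
    fun i y => rfl
  have hp : HasFDerivAt (fun y : EuclideanSpace ℝ (Fin (N+1)) => (y 0) ^ (1 - 2*s))
      (((1 - 2*s) * (z 0) ^ (1 - 2*s - 1)) • P 0) z := by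
    have h1 : HasDerivAt (fun x : ℝ => x ^ (1 - 2*s)) ((1 - 2*s) * (z 0) ^ (1 - 2*s - 1))
        (z 0) := Real.hasDerivAt_rpow_const (Or.inl ht.ne')
    have h2 : HasFDerivAt (fun y : EuclideanSpace ℝ (Fin (N+1)) => (y 0 : ℝ))
        (P 0) z := (P 0).hasFDerivAt
    exact h1.comp_hasFDerivAt z h2
  have hq : HasFDerivAt (fun y => ‖gradient w y‖^2)
      (2 • (innerSL ℝ (gradient w z)).comp G) z := hG.norm_sq
  have hr : HasFDerivAt (fun y : EuclideanSpace ℝ (Fin (N+1)) => ⟪y, gradient w y⟫)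
      ((fderivInnerCLM ℝ (z, gradient w z)).comp
        ((ContinuousLinearMap.id ℝ _).prod G)) z := (hasFDerivAt_id z).inner ℝ hG
  have hyi : ∀ i : Fin (N+1), HasFDerivAt (fun y : EuclideanSpace ℝ (Fin (N+1)) => (y i : ℝ))
      (P i) z := fun i => (P i).hasFDerivAt
  have hcomp : ∀ i : Fin (N+1), HasFDerivAt (fun y => (gradient w y i : ℝ))
      ((P i).comp G) z := fun i => (P i).hasFDerivAt.comp z hG
  have hDa := (hp.const_mul (1/2 : ℝ)).mul hq
  have hDb := hp.mul hr
  have keyA : ∀ i : Fin (N+1),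
      fderiv ℝ (fun y : EuclideanSpace ℝ (Fin (N+1)) =>
        (((1/2) * (y 0) ^ (1 - 2*s) * ‖gradient w y‖^2) • y
          - ((y 0) ^ (1 - 2*s) * ⟪y, gradient w y⟫) • gradient w y) i) z
        (EuclideanSpace.single i 1)
      = 1/2 * (z 0)^(1-2*s) * ‖gradient w z‖^2
        + (z 0)^(1-2*s) * (z i * ∑ j, gradient w z j *
            f'' (EuclideanSpace.single i 1) (EuclideanSpace.single j 1))
        + (1/2 * ‖gradient w z‖^2 * ((1-2*s) * (z 0)^(1-2*s-1)))
            * (z i * (if (0:Fin (N+1)) = i then 1 else 0))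
        - (z 0)^(1-2*s) * ⟪z, gradient w z⟫
            * f'' (EuclideanSpace.single i 1) (EuclideanSpace.single i 1)
        - (z 0)^(1-2*s) * (gradient w z i * ∑ j, z j *
            f'' (EuclideanSpace.single i 1) (EuclideanSpace.single j 1))
        - (z 0)^(1-2*s) * (gradient w z i * gradient w z i)
        - (⟪z, gradient w z⟫ * ((1-2*s) * (z 0)^(1-2*s-1)))
            * (gradient w z i * (if (0:Fin (N+1)) = i then 1 else 0)) := by
    intro i
    have hbig := (hDa.mul (hyi i)).sub (hDb.mul (hcomp i))
    have hbig' : HasFDerivAt (fun y : EuclideanSpace ℝ (Fin (N+1)) =>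
        (((1/2) * (y 0) ^ (1 - 2*s) * ‖gradient w y‖^2) • y
          - ((y 0) ^ (1 - 2*s) * ⟪y, gradient w y⟫) • gradient w y) i) _ z := hbig
    rw [hbig'.fderiv]
    simp only [ContinuousLinearMap.sub_apply, ContinuousLinearMap.add_apply,
      ContinuousLinearMap.smul_apply, ContinuousLinearMap.comp_apply,
      ContinuousLinearMap.prod_apply, ContinuousLinearMap.id_apply,
      fderivInnerCLM_apply, innerSL_apply_apply, smul_eq_mul, PiLp.proj_apply, hPapp, Pi.mul_apply]
    rw [hip, hip, hGapp]
    simp only [EuclideanSpace.single_apply, EuclideanSpace.inner_single_left, smul_eq_mul,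
      nsmul_eq_mul, map_one, one_mul, eq_self_iff_true, if_true, Nat.cast_ofNat]
    ring
  have keyB : ∀ i : Fin (N+1),
      fderiv ℝ (fun y : EuclideanSpace ℝ (Fin (N+1)) =>
        ((y 0) ^ (1 - 2*s) • gradient w y) i) z (EuclideanSpace.single i 1)
      = (z 0)^(1-2*s) * f'' (EuclideanSpace.single i 1) (EuclideanSpace.single i 1)
        + ((1-2*s) * (z 0)^(1-2*s-1))
            * (gradient w z i * (if (0:Fin (N+1)) = i then 1 else 0)) := by
    intro i
    have hB := hp.mul (hcomp i)
    have hB' : HasFDerivAt (fun y : EuclideanSpace ℝ (Fin (N+1)) =>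
        ((y 0) ^ (1 - 2*s) • gradient w y) i) _ z := hB
    rw [hB'.fderiv]
    simp only [ContinuousLinearMap.sub_apply, ContinuousLinearMap.add_apply,
      ContinuousLinearMap.smul_apply, ContinuousLinearMap.comp_apply,
      ContinuousLinearMap.prod_apply, ContinuousLinearMap.id_apply,
      fderivInnerCLM_apply, innerSL_apply_apply, smul_eq_mul, PiLp.proj_apply, hPapp]
    rw [hGapp]
    simp only [EuclideanSpace.single_apply]
    ring
  have hq0 : (∑ i, gradient w z i * gradient w z i) = ‖gradient w z‖^2 := by
    rw [← real_inner_self_eq_norm_sq, PiLp.inner_apply]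
    simp
    simp only [sq]
  have hswap : (∑ i, z i * ∑ j, gradient w z j *
        f'' (EuclideanSpace.single i 1) (EuclideanSpace.single j 1))
      = ∑ i, gradient w z i * ∑ j, z j *
        f'' (EuclideanSpace.single i 1) (EuclideanSpace.single j 1) := by
    simp_rw [Finset.mul_sum]
    rw [Finset.sum_comm]
    refine Finset.sum_congr rfl fun i _ => Finset.sum_congr rfl fun j _ => ?_
    rw [hsym]
    ring
  have hS3 : (∑ i, z i * if (0:Fin (N+1)) = i then 1 else 0) = z 0 := by simp
  have hS7 : (∑ i, gradient w z i * if (0:Fin (N+1)) = i then 1 else 0)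
      = gradient w z 0 := by simp
  have hpow : (z 0)^(1-2*s) = (z 0)^(1-2*s-1) * z 0 := by
    rw [← Real.rpow_add_one ht.ne']
    norm_num
    ring_nf
  simp only [divergence]
  rw [Finset.sum_congr rfl fun i _ => keyA i, Finset.sum_congr rfl fun i _ => keyB i]
  simp only [Finset.sum_sub_distrib, Finset.sum_add_distrib, ← Finset.mul_sum,
    Finset.sum_const, Finset.card_univ, Fintype.card_fin, nsmul_eq_mul]
  rw [hswap, hS3, hS7, hq0, hpow]
  push_cast
  ring
end
end
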